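/- arXiv:1608.07691 — 2 statements merged into one kernel-verified Lean document; each statement's English description precedes it below -/
import Mathlib

section
/- Let M : [0,∞) → [0,∞) be continuous and suppose: (C_M^1) there exists m₀ > 0 with M(t) ≥ m₀ for all t ≥ 0; (C_M^2) there exists t₀ ≥ 0 such that M̂(t) ≥ t·M(t) for every t ≥ t₀, where M̂(t) := ∫₀ᵗ M(τ) dτ. Then there exist constants m₁ > 0 and m₂ > 0 such that M̂(t) ≤ m₁·t + m₂ for every t ≥ 0. -/
open MeasureTheory

/-- **Lemma (sublinear growth of the potential).**
Let `M : [0,∞) → [0,∞)` be continuous with `(C_M^1)`: `M t ≥ m₀ > 0` for all `t ≥ 0`,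
and `(C_M^2)`: there is `t₀ ≥ 0` with `M̂ t ≥ t * M t` for all `t ≥ t₀`, where
`M̂ t = ∫ τ in 0..t, M τ`. Then there are `m₁, m₂ > 0` with `M̂ t ≤ m₁ * t + m₂`
for all `t ≥ 0`. -/
theorem potential_sublinear_growth
    (M : ℝ → ℝ) (hMcont : ContinuousOn M (Set.Ici 0))
    (hMnonneg : ∀ t : ℝ, 0 ≤ t → 0 ≤ M t)
    (m₀ : ℝ) (hm₀ : 0 < m₀) (hCM1 : ∀ t : ℝ, 0 ≤ t → m₀ ≤ M t)
    (t₀ : ℝ) (ht₀ : 0 ≤ t₀)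
    (hCM2 : ∀ t : ℝ, t₀ ≤ t → t * M t ≤ ∫ τ in (0:ℝ)..t, M τ) :
    ∃ m₁ : ℝ, 0 < m₁ ∧ ∃ m₂ : ℝ, 0 < m₂ ∧
      ∀ t : ℝ, 0 ≤ t → (∫ τ in (0:ℝ)..t, M τ) ≤ m₁ * t + m₂ := by
  set F : ℝ → ℝ := fun t => ∫ τ in (0:ℝ)..t, M τ with hF
  set t₁ : ℝ := max t₀ 1 with ht₁def
  have ht₁pos : (0:ℝ) < t₁ := lt_of_lt_of_le one_pos (le_max_right _ _)
  -- integrability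
  have hint : ∀ t : ℝ, 0 ≤ t → IntervalIntegrable M volume 0 t := by
    intro t ht
    exact (hMcont.mono (by rw [Set.uIcc_of_le ht]; exact Set.Icc_subset_Ici_self)).intervalIntegrable
  -- derivative of F at points t > 0
  have hderivF : ∀ t : ℝ, 0 < t → HasDerivAt F (M t) t := by
    intro t ht
    have hmem : Set.Ici (0:ℝ) ∈ nhds t := Ici_mem_nhds ht
    have hca : ContinuousAt M t := hMcont.continuousAt hmem
    exact intervalIntegral.integral_hasDerivAt_right (hint t ht.le)
      (((hMcont.mono Set.Ioi_subset_Ici_self).stronglyMeasurableAtFilter isOpen_Ioi) t ht) hca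
  -- F is monotone on [0, ∞)
  have hFmono : ∀ s t : ℝ, 0 ≤ s → s ≤ t → F s ≤ F t := by
    intro s t hs hst
    have h1 : F t - F s = ∫ τ in s..t, M τ := by
      rw [hF]
      rw [intervalIntegral.integral_interval_sub_left (hint t (hs.trans hst)) (hint s hs)]
    have h2 : 0 ≤ ∫ τ in s..t, M τ := by
      apply intervalIntegral.integral_nonneg hst
      intro x hx; exact hMnonneg x (hs.trans hx.1)
    linarith
  -- lower bound F t₁ ≥ m₀ * t₁
  have hFt₁ : m₀ * t₁ ≤ F t₁ := by
    have := intervalIntegral.integral_mono_on ht₁pos.le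
      (intervalIntegrable_const) (hint t₁ ht₁pos.le)
      (fun x hx => hCM1 x hx.1)
    simpa [mul_comm] using this
  have hFt₁pos : 0 < F t₁ := lt_of_lt_of_le (by positivity) hFt₁
  -- g = F / id is antitone on [t₁, ∞)
  have hg : AntitoneOn (fun t => F t / t) (Set.Ici t₁) := by
    apply antitoneOn_of_deriv_nonpos (convex_Ici t₁)
    · apply ContinuousOn.div
      · intro x hx
        exact ((hderivF x (lt_of_lt_of_le ht₁pos hx)).continuousAt).continuousWithinAt
      · exact continuousOn_id
      · intro x hx; exact (lt_of_lt_of_le ht₁pos hx).ne'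
    · intro x hx
      rw [interior_Ici] at hx
      have hxpos : 0 < x := lt_trans ht₁pos hx
      exact DifferentiableAt.differentiableWithinAt (((hderivF x hxpos).differentiableAt).div
        differentiableAt_id (hxpos.ne'))
    · intro x hx
      rw [interior_Ici] at hx
      have hxpos : 0 < x := lt_trans ht₁pos hx
      have hd : HasDerivAt (fun t => F t / t) ((M x * x - F x * 1) / x ^ 2) x :=
        (hderivF x hxpos).div (hasDerivAt_id x) hxpos.ne'
      rw [hd.deriv]
      apply div_nonpos_of_nonpos_of_nonneg _ (sq_nonneg x)
      have h2 := hCM2 x (le_trans (le_max_left _ _) hx.le)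
      have : F x = ∫ τ in (0:ℝ)..x, M τ := rfl
      nlinarith [h2]
  refine ⟨F t₁ / t₁, div_pos hFt₁pos ht₁pos, F t₁, hFt₁pos, ?_⟩
  intro t ht
  rcases le_total t t₁ with h | h
  · have h1 : F t ≤ F t₁ := hFmono t t₁ ht h
    have h2 : 0 ≤ F t₁ / t₁ * t := mul_nonneg (div_nonneg hFt₁pos.le ht₁pos.le) ht
    linarith
  · have h1 : F t / t ≤ F t₁ / t₁ := hg (Set.self_mem_Ici) h h
    have htpos : 0 < t := lt_of_lt_of_le ht₁pos h
    have h2 : F t ≤ F t₁ / t₁ * t := by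
      rw [div_le_div_iff₀ htpos ht₁pos] at h1
      rw [div_mul_eq_mul_div, le_div_iff₀ ht₁pos]
      linarith [h1]
    linarith
end

section
/- (Mountain Pass Theorem) Let (E, ‖·‖_E) be a real Banach space and let J : E → ℝ be Fréchet differentiable at every point, with derivative map J′ : E → E* continuous. Assume J(0) = 0 and that J satisfies the Palais–Smale condition: every sequence (u_j) in E with (J(u_j)) convergent in ℝ and ‖J′(u_j)‖_{E*} → 0 possesses a convergent subsequence. Suppose moreover: (I₁) there exist constants ρ > 0 and α > 0 such that J(u) ≥ α whenever ‖u‖_E = ρ; (I₂) there exists e ∈ E with ‖e‖_E > ρ and J(e) ≤ 0. Then, setting Γ := { γ : [0,1] → E continuous : γ(0) = 0 and γ(1) = e } and c := inf_{γ ∈ Γ} max_{t ∈ [0,1]} J(γ(t)), one has c ≥ α and c is a critical value of J, i.e., there exists u ∈ E with J(u) = c and J′(u) = 0. -/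
/-! The paths from `0` to `e` form a complete metric space on which `γ ↦ max (J ∘ γ)` is lower
semicontinuous and, by (I₁) and the intermediate value theorem, bounded below by
`α > max (J 0) (J e)`. Ekeland's principle yields paths that minimise this functional up to
`ε · dist`. If `‖J'‖ > 2ε` on the whole top level of such a path, pushing it along a continuous
pseudo-gradient field lowers its maximum by `(3/2) ε τ` while moving it by at most `τ`, which is
absurd. So every such path has a point at level close to `c` where `‖J'‖ ≤ 2ε`; these points form
a Palais–Smale sequence at level `c`, and the limit of a convergent subsequence is a critical
point. -/

open Filter Topology

section Ekeland

open Set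

variable {X : Type*} [MetricSpace X] {f : X → ℝ} {ε : ℝ}

def ekelandSet (f : X → ℝ) (ε : ℝ) (x : X) : Set X := {y | f y + ε * dist x y ≤ f x}

theorem self_mem_ekelandSet (x : X) : x ∈ ekelandSet f ε x := by
  simp [ekelandSet]

theorem ekelandSet_subset (hε : 0 ≤ ε) {x y : X} (hy : y ∈ ekelandSet f ε x) :
    ekelandSet f ε y ⊆ ekelandSet f ε x := fun z hz => by
  have hy : f y + ε * dist x y ≤ f x := hy
  have hz : f z + ε * dist y z ≤ f y := hz
  show f z + ε * dist x z ≤ f x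
  nlinarith [dist_triangle x y z]

theorem isClosed_ekelandSet (hf : LowerSemicontinuous f) (x : X) :
    IsClosed (ekelandSet f ε x) :=
  (hf.add (continuous_const.mul (continuous_const.dist continuous_id)).lowerSemicontinuous)
    |>.isClosed_preimage (f x)

/-- Take `y` with `f y` within `ε δ` of the infimum of `f` over `ekelandSet f ε x`. -/
theorem exists_ekelandSet_subset_closedBall (hbdd : BddBelow (range f)) (hε : 0 < ε) (x : X)
    {δ : ℝ} (hδ : 0 < δ) : ∃ y ∈ ekelandSet f ε x, ekelandSet f ε y ⊆ Metric.closedBall y δ := by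
  obtain ⟨_, ⟨y, hy, rfl⟩, hlt⟩ :=
    Real.lt_sInf_add_pos ((nonempty_of_mem (self_mem_ekelandSet x)).image f) (mul_pos hε hδ)
  refine ⟨y, hy, fun z hz => ?_⟩
  have hinf : sInf (f '' ekelandSet f ε x) ≤ f z :=
    csInf_le (hbdd.mono (image_subset_range _ _)) ⟨z, ekelandSet_subset hε.le hy hz, rfl⟩
  have hz' : f z + ε * dist y z ≤ f y := hz
  rw [Metric.mem_closedBall, dist_comm]
  nlinarith

/-- Ekeland's variational principle. -/
theorem exists_le_forall_le_add_dist [CompleteSpace X] (hf : LowerSemicontinuous f)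
    (hbdd : BddBelow (range f)) (hε : 0 < ε) (x₀ : X) :
    ∃ x, f x ≤ f x₀ ∧ ∀ y, f x ≤ f y + ε * dist x y := by
  choose next hnext hball using fun (n : ℕ) (x : X) =>
    exists_ekelandSet_subset_closedBall hbdd hε x (pow_pos (one_half_pos (α := ℝ)) n)
  let u : ℕ → X := fun n => Nat.rec x₀ (fun n x => next n x) n
  -- the sets `ekelandSet f ε (u n)` are closed, nested and shrink to the point we are after
  have hanti : Antitone fun n => ekelandSet f ε (u n) :=
    antitone_nat_of_succ_le fun n => ekelandSet_subset hε.le (hnext n (u n))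
  have hmem : ∀ n m, n ≤ m → u m ∈ ekelandSet f ε (u n) :=
    fun n m h => hanti h (self_mem_ekelandSet _)
  have hdist : ∀ n {y z}, y ∈ ekelandSet f ε (u (n + 1)) → z ∈ ekelandSet f ε (u (n + 1)) →
      dist y z ≤ 2 * (1 / 2) ^ n := fun n y z hy hz => by
    linarith [dist_triangle_right y z (u (n + 1)), Metric.mem_closedBall.1 (hball n (u n) hy),
      Metric.mem_closedBall.1 (hball n (u n) hz)]
  have hgeom : Tendsto (fun n : ℕ => 2 * (1 / 2 : ℝ) ^ n) atTop (𝓝 0) := by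
    simpa using (tendsto_pow_atTop_nhds_zero_of_lt_one (r := (1 / 2 : ℝ)) (by norm_num)
      (by norm_num)).const_mul 2
  obtain ⟨x, hx⟩ := cauchySeq_tendsto_of_complete <|
    cauchySeq_of_le_tendsto_0 (s := fun n => u (n + 1)) _ (fun n m N hn hm =>
      hdist N (hmem (N + 1) (n + 1) (by omega)) (hmem (N + 1) (m + 1) (by omega))) hgeom
  have hxmem : ∀ n, x ∈ ekelandSet f ε (u n) := fun n =>
    (isClosed_ekelandSet hf _).mem_of_tendsto hx
      (eventually_ge_atTop n |>.mono fun m hm => hmem n (m + 1) (by omega))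
  have hx₀ : f x + ε * dist x₀ x ≤ f x₀ := hxmem 0
  refine ⟨x, by nlinarith [dist_nonneg (x := x₀) (y := x)], fun y => ?_⟩
  by_contra! hy
  have hyS : ∀ n, y ∈ ekelandSet f ε (u n) :=
    fun n => ekelandSet_subset hε.le (hxmem n) (le_of_lt hy)
  have hxy : x = y := dist_le_zero.1 <|
    ge_of_tendsto' hgeom fun n => hdist n (hxmem (n + 1)) (hyS (n + 1))
  simp [hxy] at hy

end Ekeland

theorem IsCompact.exists_pos_forall_Icc_of_isOpen {X : Type*} [TopologicalSpace X] {K : Set X}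
    (hK : IsCompact K) {P : ℝ → X → Prop} (hP : IsOpen {p : ℝ × X | P p.1 p.2})
    (h0 : ∀ s ∈ K, P 0 s) : ∃ τ > 0, ∀ θ ∈ Set.Icc 0 τ, ∀ s ∈ K, P θ s := by
  have h : ∀ᶠ θ in 𝓝 (0 : ℝ), ∀ s ∈ K, P θ s :=
    hK.eventually_forall_of_forall_eventually fun s hs => hP.mem_nhds (h0 s hs)
  obtain ⟨τ, hτ, hsub⟩ := mem_nhdsGE_iff_exists_Icc_subset.1 (nhdsWithin_le_nhds h)
  exact ⟨τ, hτ, hsub⟩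

theorem IsCompact.exists_pos_forall_lt_sub {X : Type*} [TopologicalSpace X] {B : Set X}
    (hB : IsCompact B) {g : X → ℝ} (hg : Continuous g) {M : ℝ} (h : ∀ s ∈ B, g s < M) :
    ∃ β > 0, ∀ s ∈ B, g s < M - β := by
  obtain ⟨β, hβ, hβB⟩ := hB.exists_pos_forall_Icc_of_isOpen (P := fun β s => g s < M - β)
    (isOpen_lt (hg.comp continuous_snd) (continuous_const.sub continuous_fst))
    fun s hs => by simpa using h s hs
  exact ⟨β, hβ, hβB β ⟨hβ.le, le_rfl⟩⟩

theorem le_iSup_of_continuous {X : Type*} [TopologicalSpace X] [CompactSpace X] {g : X → ℝ}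
    (hg : Continuous g) (t : X) : g t ≤ ⨆ s, g s :=
  le_ciSup (isCompact_range hg).bddAbove t

theorem lowerSemicontinuous_iSup_comp {X Y : Type*} [TopologicalSpace X] [CompactSpace X]
    [TopologicalSpace Y] {f : Y → ℝ} (hf : Continuous f) :
    LowerSemicontinuous fun γ : C(X, Y) => ⨆ t, f (γ t) :=
  lowerSemicontinuous_ciSup (fun γ => (isCompact_range (hf.comp γ.continuous)).bddAbove)
    fun t => (hf.comp (continuous_eval_const t)).lowerSemicontinuous

theorem le_iSup_of_norm_le_le_norm {X E : Type*} [TopologicalSpace X] [CompactSpace X]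
    [PreconnectedSpace X] [NormedAddCommGroup E] {J : E → ℝ} (hJ : Continuous J) {ρ α : ℝ}
    (hsphere : ∀ u : E, ‖u‖ = ρ → α ≤ J u) (γ : C(X, E)) {a b : X} (ha : ‖γ a‖ ≤ ρ)
    (hb : ρ ≤ ‖γ b‖) : α ≤ ⨆ t, J (γ t) := by
  obtain ⟨t, ht⟩ := intermediate_value_univ a b (continuous_norm.comp γ.continuous) ⟨ha, hb⟩
  exact (hsphere _ ht).trans (le_iSup_of_continuous (hJ.comp γ.continuous) t)

section PseudoGradient

open Set

variable {E : Type*} [NormedAddCommGroup E] [NormedSpace ℝ E]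

theorem ContinuousLinearMap.exists_norm_le_one_lt_apply (A : E →L[ℝ] ℝ) {c : ℝ} (hc : c < ‖A‖) :
    ∃ v : E, ‖v‖ ≤ 1 ∧ c < A v := by
  obtain ⟨v, hv, hcv⟩ := A.exists_lt_apply_of_lt_opNorm hc
  rcases lt_abs.1 (Real.norm_eq_abs _ ▸ hcv) with h | h
  · exact ⟨v, hv.le, h⟩
  · exact ⟨-v, by simpa using hv.le, by simpa using h⟩

/-- A continuous pseudo-gradient field, glued from locally constant directions by a partition
of unity. -/
theorem exists_continuous_norm_le_one_lt_apply {X : Type*} [TopologicalSpace X] [NormalSpace X]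
    [ParacompactSpace X] {A : X → E →L[ℝ] ℝ} (hA : Continuous A) {K L : Set X}
    (hK : IsClosed K) (hL : IsClosed L) (hKL : Disjoint K L) {c : ℝ}
    (hc : ∀ s ∈ K, c < ‖A s‖) :
    ∃ V : C(X, E), ∀ s, ‖V s‖ ≤ 1 ∧ (s ∈ K → c < A s (V s)) ∧ (s ∈ L → V s = 0) := by
  let t : X → Set E := fun s =>
    Metric.closedBall 0 1 ∩ ({v | s ∈ K → c < A s v} ∩ {v | s ∈ L → v = 0})
  suffices ∃ V : C(X, E), ∀ s, V s ∈ t s by simpa [t] using this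
  refine exists_continuous_forall_mem_convex_of_local_const (fun s => ?_) fun s => ?_
  · refine (convex_closedBall 0 1).inter ((?_ : Convex ℝ _).inter (?_ : Convex ℝ _))
    · by_cases hs : s ∈ K
      · simpa [hs] using convex_halfSpace_gt (A s).toLinearMap.isLinear c
      · simp [hs, convex_univ]
    · by_cases hs : s ∈ L
      · simp [hs, convex_singleton]
      · simp [hs, convex_univ]
  · by_cases hs : s ∈ K
    · obtain ⟨v, hv, hcv⟩ := (A s).exists_norm_le_one_lt_apply (hc s hs)
      have hnear : ∀ᶠ s' in 𝓝 s, c < A s' v :=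
        (isOpen_lt continuous_const (hA.clm_apply continuous_const)).mem_nhds hcv
      have hoff : ∀ᶠ s' in 𝓝 s, s' ∉ L :=
        hL.isOpen_compl.mem_nhds (hKL.notMem_of_mem_left hs)
      refine ⟨v, (hnear.and hoff).mono fun s' ⟨h1, h2⟩ => ?_⟩
      exact ⟨by simpa using hv, fun _ => h1, fun h => absurd h h2⟩
    · refine ⟨0, Filter.Eventually.mono (hK.isOpen_compl.mem_nhds hs) fun s' hs' => ?_⟩
      exact ⟨by simp, fun h => absurd h hs', fun _ => rfl⟩

theorem le_sub_mul_of_le_fderiv_apply {J : E → ℝ} {J' : E → E →L[ℝ] ℝ}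
    (hdiff : ∀ u, HasFDerivAt J (J' u) u) {u v : E} {τ c : ℝ} (hτ : 0 ≤ τ)
    (hc : ∀ θ ∈ Icc 0 τ, c ≤ J' (u - θ • v) v) : J (u - τ • v) ≤ J u - c * τ := by
  have hderiv : ∀ θ : ℝ, HasDerivAt (fun θ => J (u - θ • v)) (-J' (u - θ • v) v) θ := by
    intro θ
    have hline : HasDerivAt (fun θ : ℝ => u - θ • v) (-v) θ := by
      simpa using ((hasDerivAt_id θ).smul_const v).const_sub u
    simpa [Function.comp_def] using (hdiff _).comp_hasDerivAt θ hline
  have := (convex_Icc 0 τ).image_sub_le_mul_sub_of_deriv_le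
    (fun θ _ => (hderiv θ).continuousAt.continuousWithinAt)
    (fun θ _ => (hderiv θ).differentiableAt.differentiableWithinAt) (C := -c)
    (fun θ hθ => (hderiv θ).deriv ▸ neg_le_neg (hc θ (interior_subset hθ)))
    0 (left_mem_Icc.2 hτ) τ (right_mem_Icc.2 hτ) hτ
  simp only [zero_smul, sub_zero] at this
  linarith

end PseudoGradient

def pathMaxLevels {X E : Type*} [TopologicalSpace X] [TopologicalSpace E] (J : E → ℝ)
    (γ₀ : C(X, E)) (L : Set X) : Set ℝ :=
  {m | ∃ γ : C(X, E), Set.EqOn γ γ₀ L ∧ m = ⨆ t, J (γ t)}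

section Deformation

open Set

variable {E : Type*} [NormedAddCommGroup E] [NormedSpace ℝ E]
  {J : E → ℝ} {J' : E → E →L[ℝ] ℝ} {X : Type*} [TopologicalSpace X] [CompactSpace X] [T2Space X]

theorem exists_deformation_le_sub (hdiff : ∀ u, HasFDerivAt J (J' u) u) (hcont : Continuous J')
    (γ : C(X, E)) {L : Set X} (hL : IsClosed L) {M c c' : ℝ} (hM : ∀ s, J (γ s) ≤ M)
    (hLM : ∀ s ∈ L, J (γ s) < M) (hcrit : ∀ s, J (γ s) = M → c < ‖J' (γ s)‖)
    (hc' : 0 < c') (hcc' : c' < c) :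
    ∃ τ > 0, ∃ σ : C(X, E), EqOn σ γ L ∧ dist γ σ ≤ τ ∧ ∀ s, J (σ s) ≤ M - c' * τ := by
  have hJ : Continuous J := continuous_iff_continuousAt.2 fun u => (hdiff u).continuousAt
  have hJγ : Continuous fun s => J (γ s) := hJ.comp γ.continuous
  obtain ⟨β, hβ, hβB⟩ := (hL.union (isClosed_le (hcont.comp γ.continuous).norm
      continuous_const)).isCompact.exists_pos_forall_lt_sub hJγ fun s hs =>
    hs.elim (hLM s) fun hs => (hM s).lt_of_ne fun h => (hcrit s h).not_ge hs
  set K := {s | M - β ≤ J (γ s)}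
  have hKL : ∀ s ∈ K, s ∉ L ∧ c < ‖J' (γ s)‖ := fun s hs =>
    ⟨fun h => (hβB s (Or.inl h)).not_ge hs, not_le.1 fun h => (hβB s (Or.inr h)).not_ge hs⟩
  have hK : IsClosed K := isClosed_le continuous_const hJγ
  obtain ⟨V, hV⟩ := exists_continuous_norm_le_one_lt_apply (hcont.comp γ.continuous) hK hL
    (disjoint_left.2 fun s hs => (hKL s hs).1) fun s hs => (hKL s hs).2
  obtain ⟨τ₁, hτ₁, hslope⟩ := hK.isCompact.exists_pos_forall_Icc_of_isOpen
    (P := fun θ s => c' < J' (γ s - θ • V s) (V s)) (isOpen_lt continuous_const (by fun_prop))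
    fun s hs => by simpa using hcc'.trans ((hV s).2.1 hs)
  obtain ⟨τ₂, hτ₂, hnear⟩ := isCompact_univ.exists_pos_forall_Icc_of_isOpen
    (P := fun θ s => J (γ s - θ • V s) < J (γ s) + β / 2) (isOpen_lt (by fun_prop) (by fun_prop))
    fun s _ => by simpa using hβ
  set τ := min (min τ₁ τ₂) (β / (2 * c'))
  have hτ : 0 < τ := by positivity
  have hτβ : c' * τ ≤ β / 2 := by
    calc c' * τ ≤ c' * (β / (2 * c')) := by gcongr; exact min_le_right _ _
      _ = β / 2 := by field_simp
  refine ⟨τ, hτ, γ - τ • V, fun s hs => by simp [(hV s).2.2 hs], ?_, fun s => ?_⟩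
  · rw [dist_eq_norm, sub_sub_cancel, norm_smul, Real.norm_of_nonneg hτ.le]
    exact mul_le_of_le_one_right hτ.le ((ContinuousMap.norm_le _ zero_le_one).2 fun s => (hV s).1)
  · simp only [ContinuousMap.sub_apply, ContinuousMap.smul_apply]
    by_cases hs : s ∈ K
    · have := le_sub_mul_of_le_fderiv_apply hdiff hτ.le fun θ hθ =>
        (hslope θ ⟨hθ.1, hθ.2.trans ((min_le_left _ _).trans (min_le_left _ _))⟩ s hs).le
      linarith [hM s]
    · have := hnear τ ⟨hτ.le, (min_le_left _ _).trans (min_le_right _ _)⟩ s (mem_univ s)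
      have hs : J (γ s) < M - β := not_le.1 hs
      linarith

theorem exists_norm_fderiv_le_of_forall_iSup_le_add_dist [Nonempty X]
    (hdiff : ∀ u, HasFDerivAt J (J' u) u) (hcont : Continuous J') (γ : C(X, E)) {L : Set X}
    (hL : IsClosed L) (hLM : ∀ s ∈ L, J (γ s) < ⨆ t, J (γ t)) {ε : ℝ} (hε : 0 < ε)
    (hmin : ∀ σ : C(X, E), EqOn σ γ L →
      ⨆ t, J (γ t) ≤ (⨆ t, J (σ t)) + ε * dist γ σ) :
    ∃ t, J (γ t) = ⨆ t, J (γ t) ∧ ‖J' (γ t)‖ ≤ 2 * ε := by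
  have hJ : Continuous J := continuous_iff_continuousAt.2 fun u => (hdiff u).continuousAt
  by_contra! hcrit
  obtain ⟨τ, hτ, σ, hσL, hdist, hσ⟩ := exists_deformation_le_sub hdiff hcont γ hL
    (le_iSup_of_continuous (hJ.comp γ.continuous)) hLM hcrit (c' := 3 / 2 * ε) (by positivity)
    (by linarith)
  have hsup : ⨆ t, J (σ t) ≤ (⨆ t, J (γ t)) - 3 / 2 * ε * τ := ciSup_le hσ
  nlinarith [hmin σ hσL, mul_le_mul_of_nonneg_left hdist hε.le]

theorem exists_near_critical_of_isGLB [Nonempty X] [CompleteSpace E]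
    (hdiff : ∀ u, HasFDerivAt J (J' u) u) (hcont : Continuous J') {L : Set X} (hL : IsClosed L) (γ₀ : C(X, E)) {c : ℝ}
    (hc : IsGLB (pathMaxLevels J γ₀ L) c)
    (hLc : ∀ s ∈ L, J (γ₀ s) < c) {ε : ℝ} (hε : 0 < ε) :
    ∃ u, c ≤ J u ∧ J u < c + ε ∧ ‖J' u‖ ≤ 2 * ε := by
  have hJ : Continuous J := continuous_iff_continuousAt.2 fun u => (hdiff u).continuousAt
  let Γ := {γ : C(X, E) | EqOn γ γ₀ L}
  have hΓ : IsClosed Γ := by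
    simp only [Γ, EqOn, ofPred_forall]
    exact isClosed_biInter fun s _ => isClosed_eq (continuous_eval_const s) continuous_const
  have : CompleteSpace Γ := hΓ.completeSpace_coe
  let Φ : Γ → ℝ := fun γ => ⨆ t, J (γ.1 t)
  have hΦc : ∀ γ : Γ, c ≤ Φ γ := fun γ => hc.1 ⟨γ.1, γ.2, rfl⟩
  obtain ⟨_, ⟨γ₁, hγ₁, rfl⟩, -, hγ₁c⟩ := hc.exists_between (lt_add_of_pos_right c hε)
  obtain ⟨q, hqγ₁, hq⟩ := exists_le_forall_le_add_dist
    ((lowerSemicontinuous_iSup_comp hJ).comp continuous_subtype_val) ⟨c, by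
      rintro _ ⟨γ, rfl⟩; exact hΦc γ⟩ hε (⟨γ₁, hγ₁⟩ : Γ)
  obtain ⟨t, ht, hJ't⟩ := exists_norm_fderiv_le_of_forall_iSup_le_add_dist hdiff hcont q.1 hL
    (fun s hs => (q.2 hs).symm ▸ (hLc s hs).trans_le (hΦc q)) hε
    fun σ hσ => hq ⟨σ, hσ.trans q.2⟩
  exact ⟨q.1 t, ht ▸ hΦc q, ht ▸ hqγ₁.trans_lt hγ₁c, hJ't⟩

theorem exists_palaisSmale_seq_of_isGLB [Nonempty X] [CompleteSpace E]
    (hdiff : ∀ u, HasFDerivAt J (J' u) u) (hcont : Continuous J') {L : Set X} (hL : IsClosed L) (γ₀ : C(X, E)) {c : ℝ}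
    (hc : IsGLB (pathMaxLevels J γ₀ L) c)
    (hLc : ∀ s ∈ L, J (γ₀ s) < c) :
    ∃ u : ℕ → E, Tendsto (fun j => J (u j)) atTop (𝓝 c) ∧
      Tendsto (fun j => ‖J' (u j)‖) atTop (𝓝 0) := by
  choose u hcu huc hJ'u using fun j : ℕ =>
    exists_near_critical_of_isGLB hdiff hcont hL γ₀ hc hLc (Nat.one_div_pos_of_nat (n := j))
  have hlim : Tendsto (fun j : ℕ => 1 / ((j : ℝ) + 1)) atTop (𝓝 0) :=
    tendsto_one_div_add_atTop_nhds_zero_nat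
  refine ⟨u, ?_, ?_⟩
  · exact tendsto_of_tendsto_of_tendsto_of_le_of_le tendsto_const_nhds
      (by simpa using tendsto_const_nhds.add hlim) hcu fun j => (huc j).le
  · exact squeeze_zero (fun j => norm_nonneg _) hJ'u (by simpa using hlim.const_mul 2)

theorem eq_and_eq_zero_of_tendsto (hJ : Continuous J) (hJ' : Continuous J') {ι : Type*}
    {l : Filter ι} [l.NeBot] {u : ι → E} {v : E} {c : ℝ}
    (hv : Tendsto u l (𝓝 v)) (hJu : Tendsto (fun j => J (u j)) l (𝓝 c))
    (hJ'u : Tendsto (fun j => ‖J' (u j)‖) l (𝓝 0)) : J v = c ∧ J' v = 0 :=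
  ⟨tendsto_nhds_unique ((hJ.tendsto v).comp hv) hJu,
    norm_eq_zero.1 (tendsto_nhds_unique (((hJ'.tendsto v).norm).comp hv) hJ'u)⟩

end Deformation

/-- **Mountain Pass Theorem.**
Let `E` be a real Banach space and `J : E → ℝ` a `C¹` functional (Fréchet
differentiable everywhere with continuous derivative `J' : E → E*`) with
`J 0 = 0`, satisfying the Palais–Smale condition. If
`(I₁)` there are `ρ, α > 0` with `J u ≥ α` whenever `‖u‖ = ρ`, and
`(I₂)` there is `e` with `‖e‖ > ρ` and `J e ≤ 0`,
then `c := inf_{γ ∈ Γ} max_{t ∈ [0,1]} J(γ t)` (over continuous paths `γ` from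
`0` to `e`) satisfies `c ≥ α` and `c` is a critical value of `J`. -/
theorem mountain_pass_theorem
    {E : Type*} [NormedAddCommGroup E] [NormedSpace ℝ E] [CompleteSpace E]
    (J : E → ℝ) (J' : E → (E →L[ℝ] ℝ))
    (hdiff : ∀ u : E, HasFDerivAt J (J' u) u)
    (hcont : Continuous J')
    (hJ0 : J 0 = 0)
    (hPS : ∀ (u : ℕ → E) (μ : ℝ),
      Tendsto (fun j => J (u j)) atTop (𝓝 μ) →
      Tendsto (fun j => ‖J' (u j)‖) atTop (𝓝 0) →
      ∃ (φ : ℕ → ℕ) (v : E), StrictMono φ ∧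
        Tendsto (fun k => u (φ k)) atTop (𝓝 v))
    (ρ α : ℝ) (hρ : 0 < ρ) (hα : 0 < α)
    (hI1 : ∀ u : E, ‖u‖ = ρ → α ≤ J u)
    (e : E) (he : ρ < ‖e‖) (hJe : J e ≤ 0) :
    ∃ c : ℝ,
      c = sInf {m : ℝ | ∃ γ : C(Set.Icc (0:ℝ) 1, E),
        γ ⟨0, by norm_num⟩ = 0 ∧ γ ⟨1, by norm_num⟩ = e ∧
        m = ⨆ t : Set.Icc (0:ℝ) 1, J (γ t)} ∧
      α ≤ c ∧ ∃ u : E, J u = c ∧ J' u = 0 := by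
  have hJ : Continuous J := continuous_iff_continuousAt.2 fun u => (hdiff u).continuousAt
  let γ₀ : C(Set.Icc (0:ℝ) 1, E) := ⟨fun t => (t : ℝ) • e, by fun_prop⟩
  set S := {m : ℝ | ∃ γ : C(Set.Icc (0:ℝ) 1, E),
    γ ⟨0, by norm_num⟩ = 0 ∧ γ ⟨1, by norm_num⟩ = e ∧ m = ⨆ t : Set.Icc (0:ℝ) 1, J (γ t)}
  set L : Set (Set.Icc (0:ℝ) 1) := {⟨0, by norm_num⟩, ⟨1, by norm_num⟩}
  have hS : S = pathMaxLevels J γ₀ L := by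
    ext m
    simp [S, L, pathMaxLevels, Set.EqOn, γ₀, and_assoc]
  have hα : ∀ m ∈ S, α ≤ m := by
    rintro _ ⟨γ, h0, h1, rfl⟩
    exact le_iSup_of_norm_le_le_norm hJ hI1 γ (by rw [h0, norm_zero]; exact hρ.le) (h1 ▸ he.le)
  have hne : S.Nonempty := ⟨_, γ₀, by simp [γ₀], by simp [γ₀], rfl⟩
  have hcα : α ≤ sInf S := le_csInf hne hα
  have hglb : IsGLB (pathMaxLevels J γ₀ L) (sInf S) := hS ▸ isGLB_csInf hne ⟨α, hα⟩
  obtain ⟨u, hJu, hJ'u⟩ := exists_palaisSmale_seq_of_isGLB hdiff hcont (Set.toFinite L).isClosed γ₀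
    hglb (by rintro s (rfl | rfl) <;> simp [γ₀] <;> linarith)
  obtain ⟨φ, v, hφ, hv⟩ := hPS u _ hJu hJ'u
  exact ⟨_, rfl, hcα, v, eq_and_eq_zero_of_tendsto hJ hcont hv (hJu.comp hφ.tendsto_atTop)
    (hJ'u.comp hφ.tendsto_atTop)⟩
end
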